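/- Let m ≥ 2 and let (λᵢ), (μᵢ), (bᵢ) be real m-tuples satisfying: (i) λᵢ·δⱼᵏ + μᵢ·bⱼ·δⱼᵏ = λⱼ·δᵢᵏ + μⱼ·bᵢ·δᵢᵏ for all i,j,k (the symmetry relation for a diagonal B = diag(bᵢ)), where Σᵢ bᵢ = 0. Then for each i: λᵢ - (1/(m-1))·μᵢ·bᵢ = 0, and for each i ≠ j: λᵢ + μᵢ·bⱼ = 0; consequently μᵢ·(bⱼ + (1/(m-1))·bᵢ) = 0 for all i ≠ j. -/

import Mathlib

/-! Taking `k = j ≠ i` in the symmetry relation gives `lᵢ + μᵢ bⱼ = 0`; summing this over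
`j ≠ i` and using `∑ bⱼ = 0` gives `(m - 1) lᵢ = μᵢ bᵢ`. -/

open Finset

lemma add_mul_eq_zero_of_kronecker_symm {ι R : Type*} [DecidableEq ι] [CommSemiring R]
    {l μ b : ι → R}
    (hsym : ∀ i j k : ι,
      l i * (if j = k then (1 : R) else 0) + μ i * b j * (if j = k then (1 : R) else 0)
        = l j * (if i = k then (1 : R) else 0) + μ j * b i * (if i = k then (1 : R) else 0))
    {i j : ι} (hij : i ≠ j) : l i + μ i * b j = 0 := by
  simpa [hij] using hsym i j j

lemma card_sub_one_mul_eq_of_forall_ne {ι R : Type*} [Fintype ι] [CommRing R] {b : ι → R}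
    (hb : ∑ j, b j = 0) {i : ι} {c d : R} (h : ∀ j, j ≠ i → c + d * b j = 0) :
    ((Fintype.card ι : R) - 1) * c = d * b i := by
  have hsum : ∑ j, (c + d * b j) = c + d * b i := Fintype.sum_eq_single i h
  rw [sum_add_distrib, ← mul_sum, hb, sum_const, card_univ, nsmul_eq_mul] at hsum
  linear_combination hsum

/-- the Cartan-lemma symmetry relation
λᵢδⱼᵏ + μᵢbⱼδⱼᵏ = λⱼδᵢᵏ + μⱼbᵢδᵢᵏ with Σ bᵢ = 0 yields
λᵢ - (1/(m-1))μᵢbᵢ = 0, and λᵢ + μᵢbⱼ = 0 for i ≠ j, hence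
μᵢ(bⱼ + (1/(m-1))bᵢ) = 0 for i ≠ j. -/
theorem stmt8 (m : ℕ) (hm : 2 ≤ m) (l μ b : Fin m → ℝ)
    (htr : ∑ i, b i = 0)
    (hsym : ∀ i j k : Fin m,
      l i * (if j = k then (1 : ℝ) else 0) + μ i * b j * (if j = k then (1 : ℝ) else 0)
        = l j * (if i = k then (1 : ℝ) else 0) + μ j * b i * (if i = k then (1 : ℝ) else 0)) :
    (∀ i, l i - (1 / ((m : ℝ) - 1)) * μ i * b i = 0) ∧
    (∀ i j, i ≠ j → l i + μ i * b j = 0) ∧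
    (∀ i j, i ≠ j → μ i * (b j + (1 / ((m : ℝ) - 1)) * b i) = 0) := by
  have off_diag : ∀ i j, i ≠ j → l i + μ i * b j = 0 := fun i j hij ↦
    add_mul_eq_zero_of_kronecker_symm hsym hij
  have hm1 : (m : ℝ) - 1 ≠ 0 := by
    have : (2 : ℝ) ≤ m := by exact_mod_cast hm
    linarith
  have diag : ∀ i, l i - (1 / ((m : ℝ) - 1)) * μ i * b i = 0 := by
    intro i
    have h := card_sub_one_mul_eq_of_forall_ne htr fun j hj ↦ off_diag i j hj.symm
    rw [Fintype.card_fin] at h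
    field_simp
    linear_combination h
  refine ⟨diag, off_diag, fun i j hij ↦ ?_⟩
  linear_combination off_diag i j hij - diag i
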